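/- arXiv:2508.06320 — 2 statements merged into one kernel-verified Lean document; each statement's English description precedes it below -/
import Mathlib

section
/- For every instance of the charging game with T=2 time steps and every price profile p∈ℝ², there exists a Nash equilibrium. -/
/-!
Formalization of the charging game on capacitated energy networks.

An instance consists of a finite directed host graph `H = (V, E)`, `T` time steps
(with per-time-step edge capacities `κE` and demands `d`), and a finite set `B` of
battery agents, each located at a node `loc b`, with battery edges `(b_t, b_{t+1})`
of capacity `κB b t`.
-/

structure ChargingGame where
  /-- households/vertices of the host graph -/
  V : Type
  fintypeV : Fintype V
  decV : DecidableEq V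
  /-- number of time steps (time steps are indexed by `Fin T`) -/
  T : ℕ
  T_pos : 0 < T
  /-- directed edges (power lines) of the host graph -/
  E : Finset (V × V)
  /-- capacity of (the copy of) edge `e` in time step `t` -/
  κE : Fin T → V × V → ℝ
  κE_nonneg : ∀ t e, 0 ≤ κE t e
  /-- demand/supply of node `v` in time step `t` (positive = supply, negative = demand) -/
  d : Fin T → V → ℝ
  /-- the battery agents -/
  B : Type
  fintypeB : Fintype B
  decB : DecidableEq B
  /-- the location of agent `b` -/
  loc : B → V
  /-- capacity of the battery edge `(b_t, b_{t+1})` (only `t` with `t+1 < T` is relevant) -/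
  κB : B → Fin T → ℝ
  κB_nonneg : ∀ b t, 0 ≤ κB b t

attribute [instance] ChargingGame.fintypeV ChargingGame.decV
attribute [instance] ChargingGame.fintypeB ChargingGame.decB

namespace ChargingGame

variable (G : ChargingGame)

/-- Nodes of the time-expanded energy network graph `G`:
grid nodes `(t, v)`, battery nodes `(t, b)`, and `false` = source `x`, `true` = sink `y`. -/
abbrev Node : Type := (Fin G.T × G.V) ⊕ ((Fin G.T × G.B) ⊕ Bool)

/-- the source `x` -/
abbrev source : G.Node := Sum.inr (Sum.inr false)

/-- the sink `y` -/
abbrev sink : G.Node := Sum.inr (Sum.inr true)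

/-- the copy of household node `v` in time step `t` -/
abbrev gridNode (t : Fin G.T) (v : G.V) : G.Node := Sum.inl (t, v)

/-- the battery node `b_t` of agent `b` in time step `t` -/
abbrev batNode (t : Fin G.T) (b : G.B) : G.Node := Sum.inr (Sum.inl (t, b))

/-- The capacities of the graph `G_s` induced by a strategy profile
`s : B → Fin T → ℝ` (`s b t > 0` means agent `b` charges `s b t` in step `t`,
`s b t < 0` means she discharges `-(s b t)`).  Non-edges have capacity `0`. -/
def cap (s : G.B → Fin G.T → ℝ) : G.Node → G.Node → ℝ
  | Sum.inl (t, v), Sum.inl (t', v') =>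
      if t = t' ∧ (v, v') ∈ G.E then G.κE t (v, v') else 0
  | Sum.inl (t, v), Sum.inr (Sum.inl (t', b)) =>
      if t = t' ∧ G.loc b = v then max 0 (s b t') else 0
  | Sum.inr (Sum.inl (t, b)), Sum.inl (t', v) =>
      if t = t' ∧ G.loc b = v then max 0 (-(s b t)) else 0
  | Sum.inr (Sum.inl (t, b)), Sum.inr (Sum.inl (t', b')) =>
      if b = b' ∧ (t' : ℕ) = (t : ℕ) + 1 then G.κB b t else 0
  | Sum.inr (Sum.inr false), Sum.inl (t, v) => max 0 (G.d t v)
  | Sum.inl (t, v), Sum.inr (Sum.inr true) => max 0 (-(G.d t v))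
  | _, _ => 0

/-- A feasible flow on the node set of `G` with capacities `c`. -/
structure IsFlow (c : G.Node → G.Node → ℝ) (f : G.Node → G.Node → ℝ) : Prop where
  nonneg : ∀ u v, 0 ≤ f u v
  le_cap : ∀ u v, f u v ≤ c u v
  conserve : ∀ n, n ≠ G.source → n ≠ G.sink → (∑ u, f u n) = (∑ w, f n w)

/-- The value `|f|` of a flow: total flow leaving the source. -/
def value (f : G.Node → G.Node → ℝ) : ℝ := ∑ v, f G.source v

/-- `f` is a maximum flow for capacities `c`. -/
def IsMaxFlow (c : G.Node → G.Node → ℝ) (f : G.Node → G.Node → ℝ) : Prop :=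
  G.IsFlow c f ∧ ∀ g, G.IsFlow c g → G.value g ≤ G.value f

/-- Agent `b`'s strategy is admissible for the profile `s`:
every maximum flow in `G_s` saturates both transaction edges of `b` in every time step. -/
def Admissible (s : G.B → Fin G.T → ℝ) (b : G.B) : Prop :=
  ∀ f, G.IsMaxFlow (G.cap s) f → ∀ t : Fin G.T,
    f (G.gridNode t (G.loc b)) (G.batNode t b)
        = G.cap s (G.gridNode t (G.loc b)) (G.batNode t b) ∧
    f (G.batNode t b) (G.gridNode t (G.loc b))
        = G.cap s (G.batNode t b) (G.gridNode t (G.loc b))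

/-- A valid strategy of agent `b`: all prefix sums lie between `0` and the battery
capacity (for every `t` with `t + 1 < T`, i.e. `t ∈ [T-1]` in 1-based indexing). -/
def ValidStrategy (b : G.B) (sb : Fin G.T → ℝ) : Prop :=
  ∀ t : Fin G.T, (t : ℕ) + 1 < G.T →
    0 ≤ (∑ z ∈ Finset.Iic t, sb z) ∧ (∑ z ∈ Finset.Iic t, sb z) ≤ G.κB b t

/-- A valid strategy profile. -/
def ValidProfile (s : G.B → Fin G.T → ℝ) : Prop := ∀ b, G.ValidStrategy b (s b)

open scoped Classical in
/-- The utility of agent `b` under price profile `p` and strategy profile `s`: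
`-∑ t, s b t * p t` if `b`'s strategy is admissible, and `-∞` otherwise. -/
noncomputable def utility (p : Fin G.T → ℝ) (s : G.B → Fin G.T → ℝ) (b : G.B) : EReal :=
  if G.Admissible s b then ((-(∑ t, s b t * p t) : ℝ) : EReal) else ⊥

/-- `s` is a (pure) Nash equilibrium for the price profile `p`. -/
def IsNash (p : Fin G.T → ℝ) (s : G.B → Fin G.T → ℝ) : Prop :=
  G.ValidProfile s ∧
  ∀ b (sb' : Fin G.T → ℝ), G.ValidStrategy b sb' →
    ¬ G.utility p s b < G.utility p (Function.update s b sb') b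

/-- `s` is a `k`-strong equilibrium for the price profile `p`: no nonempty coalition of
at most `k` agents has a joint deviation strictly improving the utility of each member. -/
def IsStrongEq (k : ℕ) (p : Fin G.T → ℝ) (s : G.B → Fin G.T → ℝ) : Prop :=
  G.ValidProfile s ∧
  ∀ C : Finset G.B, C.Nonempty → C.card ≤ k →
    ∀ s' : G.B → Fin G.T → ℝ, (∀ b, G.ValidStrategy b (s' b)) →
      (∀ b ∉ C, s' b = s b) →
      ¬ ∀ b ∈ C, G.utility p s b < G.utility p s' b

/-- The welfare `W(s)` of a strategy profile `s`: the value of a maximum flow in `G_s`. -/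
noncomputable def welfare (s : G.B → Fin G.T → ℝ) : ℝ :=
  sSup {r | ∃ f, G.IsFlow (G.cap s) f ∧ G.value f = r}

/-- The maximum welfare over all (valid) strategy profiles. -/
noncomputable def optWelfare : ℝ :=
  sSup {r | ∃ s, G.ValidProfile s ∧ G.welfare s = r}

end ChargingGame

/-!
With two time steps, flow conservation at the two battery nodes shows that a strategy whose
transaction edges are saturated by a maximum flow discharges in the second step exactly what it
charged in the first. So a valid admissible strategy is "charge `x ∈ [0, κ]`, then discharge
`x`", at cost `x (p₀ - p₁)`. If prices do not rise, idling is a best response for everybody.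
If they rise, pick, among the maximum flows of the network in which every battery charges its
full capacity, one flow `f₀` minimising the total amount charged, and let every agent charge
what `f₀` charges. Every maximum flow of the resulting network is also maximum at full
capacity, so by minimality it charges exactly as much, which makes the profile admissible;
and an agent who charged more would still have `f₀` as a maximum flow, which does not
saturate her enlarged charging edge.
-/

namespace ChargingGame

variable {G : ChargingGame}

section Network

variable {c f : G.Node → G.Node → ℝ}

lemma cap_nonneg (s : G.B → Fin G.T → ℝ) (u v : G.Node) : 0 ≤ G.cap s u v := by
  rcases u with ⟨t, x⟩ | ⟨⟨t, b⟩ | (_ | _)⟩ <;> rcases v with ⟨t', v'⟩ | ⟨⟨t', b'⟩ | (_ | _)⟩ <;>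
    simp only [cap] <;> (try split_ifs) <;>
    first
      | exact le_max_left _ _
      | exact G.κE_nonneg _ _
      | exact G.κB_nonneg _ _
      | exact le_rfl

@[simp]
lemma cap_charge (s : G.B → Fin G.T → ℝ) (t : Fin G.T) (b : G.B) :
    G.cap s (G.gridNode t (G.loc b)) (G.batNode t b) = max 0 (s b t) := by
  simp [cap]

@[simp]
lemma cap_discharge (s : G.B → Fin G.T → ℝ) (t : Fin G.T) (b : G.B) :
    G.cap s (G.batNode t b) (G.gridNode t (G.loc b)) = max 0 (-s b t) := by
  simp [cap]

lemma cap_into_batNode_eq_zero (s : G.B → Fin G.T → ℝ) {u : G.Node} {t : Fin G.T} {b : G.B}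
    (hgrid : u ≠ G.gridNode t (G.loc b))
    (hbat : ∀ t' : Fin G.T, (t' : ℕ) + 1 = t → u ≠ G.batNode t' b) :
    G.cap s u (G.batNode t b) = 0 := by
  rcases u with ⟨t', v⟩ | ⟨⟨t', b'⟩ | (_ | _)⟩
  · simp only [cap]
    rw [if_neg]
    rintro ⟨rfl, rfl⟩
    exact hgrid rfl
  · simp only [cap]
    rw [if_neg]
    rintro ⟨rfl, h⟩
    exact hbat t' h.symm rfl
  · rfl
  · rfl

lemma cap_from_batNode_eq_zero (s : G.B → Fin G.T → ℝ) {w : G.Node} {t : Fin G.T} {b : G.B}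
    (hgrid : w ≠ G.gridNode t (G.loc b))
    (hbat : ∀ t' : Fin G.T, (t' : ℕ) = t + 1 → w ≠ G.batNode t' b) :
    G.cap s (G.batNode t b) w = 0 := by
  rcases w with ⟨t', v⟩ | ⟨⟨t', b'⟩ | (_ | _)⟩
  · simp only [cap]
    rw [if_neg]
    rintro ⟨rfl, rfl⟩
    exact hgrid rfl
  · simp only [cap]
    rw [if_neg]
    rintro ⟨rfl, h⟩
    exact hbat t' h rfl
  · rfl
  · rfl

namespace IsFlow

lemma eq_zero_of_cap_eq_zero (hf : G.IsFlow c f) {u v : G.Node} (h : c u v = 0) : f u v = 0 :=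
  le_antisymm (h ▸ hf.le_cap u v) (hf.nonneg u v)

lemma sum_inflow_eq (hf : G.IsFlow c f) (n : G.Node) (S : Finset G.Node)
    (hS : ∀ u ∉ S, c u n = 0) : ∑ u, f u n = ∑ u ∈ S, f u n :=
  (Finset.sum_subset (Finset.subset_univ S) fun u _ hu =>
    hf.eq_zero_of_cap_eq_zero (hS u hu)).symm

lemma sum_outflow_eq (hf : G.IsFlow c f) (n : G.Node) (S : Finset G.Node)
    (hS : ∀ w ∉ S, c n w = 0) : ∑ w, f n w = ∑ w ∈ S, f n w :=
  (Finset.sum_subset (Finset.subset_univ S) fun w _ hw =>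
    hf.eq_zero_of_cap_eq_zero (hS w hw)).symm

/-- The capacities of `G_s` depend on `s` only through the transaction edges. -/
lemma of_transaction_le {s s' : G.B → Fin G.T → ℝ} (hf : G.IsFlow (G.cap s) f)
    (hcharge : ∀ t b, f (G.gridNode t (G.loc b)) (G.batNode t b) ≤
      G.cap s' (G.gridNode t (G.loc b)) (G.batNode t b))
    (hdischarge : ∀ t b, f (G.batNode t b) (G.gridNode t (G.loc b)) ≤
      G.cap s' (G.batNode t b) (G.gridNode t (G.loc b))) :
    G.IsFlow (G.cap s') f := by
  refine ⟨hf.nonneg, fun u v => ?_, hf.conserve⟩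
  have hle := hf.le_cap u v
  rcases u with ⟨t, x⟩ | ⟨⟨t, b⟩ | (_ | _)⟩ <;> rcases v with ⟨t', v'⟩ | ⟨⟨t', b'⟩ | (_ | _)⟩ <;>
    simp only [cap] at hle ⊢ <;> try exact hle
  · split_ifs at hle ⊢ with h
    · obtain ⟨rfl, rfl⟩ := h
      simpa using hcharge t b'
    · exact hle
  · split_ifs at hle ⊢ with h
    · obtain ⟨rfl, rfl⟩ := h
      simpa using hdischarge t b
    · exact hle

end IsFlow

lemma isClosed_setOf_isFlow (c : G.Node → G.Node → ℝ) : IsClosed {f | G.IsFlow c f} := by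
  have hset : {f | G.IsFlow c f} = Set.Icc 0 c ∩
      ⋂ n, ⋂ (_ : n ≠ G.source), ⋂ (_ : n ≠ G.sink), {f | ∑ u, f u n = ∑ w, f n w} := by
    ext f
    simp only [Set.mem_ofPred_eq, Set.mem_inter_iff, Set.mem_Icc, Set.mem_iInter]
    exact ⟨fun h => ⟨⟨h.nonneg, h.le_cap⟩, h.conserve⟩, fun h => ⟨h.1.1, h.1.2, h.2⟩⟩
  rw [hset]
  exact isClosed_Icc.inter <| isClosed_iInter fun n => isClosed_iInter fun _ =>
    isClosed_iInter fun _ => isClosed_eq (by fun_prop) (by fun_prop)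

lemma continuous_value : Continuous G.value := by
  unfold value
  fun_prop

lemma isCompact_setOf_isFlow (c : G.Node → G.Node → ℝ) : IsCompact {f | G.IsFlow c f} :=
  (isCompact_Icc (a := 0) (b := c)).of_isClosed_subset (isClosed_setOf_isFlow c)
    fun _ hf => ⟨hf.nonneg, hf.le_cap⟩

lemma isCompact_setOf_isMaxFlow (c : G.Node → G.Node → ℝ) :
    IsCompact {f | G.IsMaxFlow c f} := by
  have hset : {f | G.IsMaxFlow c f} = {f | G.IsFlow c f} ∩
      ⋂ g, ⋂ (_ : G.IsFlow c g), {f | G.value g ≤ G.value f} := by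
    ext f
    simp only [IsMaxFlow, Set.mem_ofPred_eq, Set.mem_inter_iff, Set.mem_iInter]
  rw [hset]
  exact (isCompact_setOf_isFlow c).inter_right <| isClosed_iInter fun g =>
    isClosed_iInter fun _ => isClosed_le continuous_const continuous_value

lemma isFlow_zero {c : G.Node → G.Node → ℝ} (hc : ∀ u v, 0 ≤ c u v) : G.IsFlow c 0 :=
  ⟨fun _ _ => le_rfl, hc, fun _ _ _ => by simp⟩

lemma exists_isMaxFlow {c : G.Node → G.Node → ℝ} (hc : ∀ u v, 0 ≤ c u v) :
    ∃ f, G.IsMaxFlow c f := by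
  obtain ⟨f, hf, hmax⟩ := (isCompact_setOf_isFlow c).exists_isMaxOn ⟨0, isFlow_zero hc⟩
    continuous_value.continuousOn
  exact ⟨f, hf, fun g hg => hmax hg⟩

end Network

section Game

variable {s : G.B → Fin G.T → ℝ} {b : G.B}

lemma admissible_of_eq_zero (hs : s b = 0) : G.Admissible s b := by
  intro f hf t
  have hcharge : G.cap s (G.gridNode t (G.loc b)) (G.batNode t b) = 0 := by simp [hs]
  have hdischarge : G.cap s (G.batNode t b) (G.gridNode t (G.loc b)) = 0 := by simp [hs]
  rw [hcharge, hdischarge]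
  exact ⟨hf.1.eq_zero_of_cap_eq_zero hcharge, hf.1.eq_zero_of_cap_eq_zero hdischarge⟩

lemma isNash_of_forall_admissible {p : Fin G.T → ℝ} (hs : G.ValidProfile s)
    (hadm : ∀ b, G.Admissible s b)
    (hbest : ∀ b sb, G.ValidStrategy b sb → G.Admissible (Function.update s b sb) b →
      ∑ t, s b t * p t ≤ ∑ t, sb t * p t) :
    G.IsNash p s := by
  refine ⟨hs, fun b sb hsb hlt => ?_⟩
  by_cases h : G.Admissible (Function.update s b sb) b
  · rw [utility, if_pos (hadm b), utility, if_pos h, Function.update_self,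
      EReal.coe_lt_coe_iff] at hlt
    linarith [hbest b sb hsb h]
  · simp only [utility, if_neg h] at hlt
    exact not_lt_bot hlt

end Game

section TwoSteps

variable (G) in
def t₀ : Fin G.T := ⟨0, G.T_pos⟩

def t₁ (hT : G.T = 2) : Fin G.T := ⟨1, by omega⟩

variable (G) in
def chargeStrategy (x : ℝ) : Fin G.T → ℝ := fun t => if (t : ℕ) = 0 then x else -x

variable (hT : G.T = 2)
include hT

lemma eq_t₀_or_eq_t₁ (t : Fin G.T) : t = G.t₀ ∨ t = t₁ hT := by
  have : (t : ℕ) = 0 ∨ (t : ℕ) = 1 := by omega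
  simpa [t₀, t₁, Fin.ext_iff] using this

lemma t₀_ne_t₁ : G.t₀ ≠ t₁ hT := by
  simp [t₀, t₁, Fin.ext_iff]

lemma sum_two_steps {M : Type*} [AddCommMonoid M] (g : Fin G.T → M) :
    ∑ t, g t = g G.t₀ + g (t₁ hT) := by
  rw [← Finset.sum_pair (t₀_ne_t₁ hT)]
  exact (Finset.sum_subset (Finset.subset_univ _) fun t _ ht =>
    absurd (by simpa using eq_t₀_or_eq_t₁ hT t) ht).symm

omit hT in
lemma Iic_t₀ : Finset.Iic G.t₀ = {G.t₀} := by
  ext t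
  simp [t₀, Fin.le_def, Fin.ext_iff]

lemma validStrategy_iff {b : G.B} {sb : Fin G.T → ℝ} :
    G.ValidStrategy b sb ↔ 0 ≤ sb G.t₀ ∧ sb G.t₀ ≤ G.κB b G.t₀ := by
  have h₀ : (G.t₀ : ℕ) + 1 < G.T := by simp [t₀, hT]
  constructor
  · intro h
    simpa [Iic_t₀] using h G.t₀ h₀
  · intro h t ht
    obtain rfl : t = G.t₀ := Fin.ext (by simp [t₀]; omega)
    simpa [Iic_t₀] using h

omit hT in
@[simp]
lemma chargeStrategy_t₀ (x : ℝ) : G.chargeStrategy x G.t₀ = x := if_pos rfl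

@[simp]
lemma chargeStrategy_t₁ (x : ℝ) : G.chargeStrategy x (t₁ hT) = -x := if_neg one_ne_zero

lemma sum_chargeStrategy_mul (x : ℝ) (p : Fin G.T → ℝ) :
    ∑ t, G.chargeStrategy x t * p t = x * (p G.t₀ - p (t₁ hT)) := by
  rw [sum_two_steps hT, chargeStrategy_t₀, chargeStrategy_t₁ hT]
  ring

namespace IsFlow

variable {s : G.B → Fin G.T → ℝ} {f : G.Node → G.Node → ℝ}

lemma conserve_batNode_t₀ (hf : G.IsFlow (G.cap s) f) (b : G.B) :
    f (G.gridNode G.t₀ (G.loc b)) (G.batNode G.t₀ b) =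
      f (G.batNode G.t₀ b) (G.gridNode G.t₀ (G.loc b)) +
        f (G.batNode G.t₀ b) (G.batNode (t₁ hT) b) := by
  have h := hf.conserve (G.batNode G.t₀ b) (by simp) (by simp)
  rwa [hf.sum_inflow_eq _ {G.gridNode G.t₀ (G.loc b)}, Finset.sum_singleton,
    hf.sum_outflow_eq _ {G.gridNode G.t₀ (G.loc b), G.batNode (t₁ hT) b},
    Finset.sum_pair (by simp)] at h
  · intro w hw
    simp only [Finset.mem_insert, Finset.mem_singleton, not_or] at hw
    refine cap_from_batNode_eq_zero s hw.1 fun t' ht' hw' => hw.2 ?_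
    rw [hw', show t' = t₁ hT from Fin.ext (by simpa [t₀, t₁] using ht')]
  · intro u hu
    refine cap_into_batNode_eq_zero s (by simpa using hu) fun t' ht' => ?_
    simp [t₀] at ht'

lemma conserve_batNode_t₁ (hf : G.IsFlow (G.cap s) f) (b : G.B) :
    f (G.batNode G.t₀ b) (G.batNode (t₁ hT) b) +
        f (G.gridNode (t₁ hT) (G.loc b)) (G.batNode (t₁ hT) b) =
      f (G.batNode (t₁ hT) b) (G.gridNode (t₁ hT) (G.loc b)) := by
  have h := hf.conserve (G.batNode (t₁ hT) b) (by simp) (by simp)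
  rwa [hf.sum_inflow_eq _ {G.batNode G.t₀ b, G.gridNode (t₁ hT) (G.loc b)},
    Finset.sum_pair (by simp), hf.sum_outflow_eq _ {G.gridNode (t₁ hT) (G.loc b)},
    Finset.sum_singleton] at h
  · intro w hw
    refine cap_from_batNode_eq_zero s (by simpa using hw) fun t' ht' => ?_
    have := t'.isLt
    simp [t₁] at ht'
    omega
  · intro u hu
    simp only [Finset.mem_insert, Finset.mem_singleton, not_or] at hu
    refine cap_into_batNode_eq_zero s hu.2 fun t' ht' hu' => hu.1 ?_
    rw [hu', show t' = G.t₀ from Fin.ext (by simpa [t₀, t₁] using ht')]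

end IsFlow

lemma eq_chargeStrategy_of_admissible {s : G.B → Fin G.T → ℝ} {b : G.B}
    (hadm : G.Admissible s b) : s b = G.chargeStrategy (s b G.t₀) := by
  obtain ⟨f, hf⟩ := exists_isMaxFlow (cap_nonneg s)
  obtain ⟨hc₀, hd₀⟩ := hadm f hf G.t₀
  obtain ⟨hc₁, hd₁⟩ := hadm f hf (t₁ hT)
  have e₀ := hf.1.conserve_batNode_t₀ hT b
  have e₁ := hf.1.conserve_batNode_t₁ hT b
  rw [hc₀, hd₀, cap_charge, cap_discharge] at e₀
  rw [hc₁, hd₁, cap_charge, cap_discharge] at e₁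
  have hpart (x : ℝ) : max 0 x - max 0 (-x) = x := by
    rw [max_comm, max_comm 0]
    exact max_zero_sub_max_neg_zero_eq_self x
  funext t
  rcases eq_t₀_or_eq_t₁ hT t with rfl | rfl
  · simp
  · linarith [chargeStrategy_t₁ hT (s b G.t₀), hpart (s b G.t₀), hpart (s b (t₁ hT))]

variable (G) in
def initialCharge (f : G.Node → G.Node → ℝ) (b : G.B) : ℝ :=
  f (G.gridNode G.t₀ (G.loc b)) (G.batNode G.t₀ b)

section ChargeProfile

variable {a : G.B → ℝ} {b : G.B}

omit hT in
lemma cap_chargeStrategy_charge_t₀ (hb : 0 ≤ a b) :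
    G.cap (G.chargeStrategy ∘ a) (G.gridNode G.t₀ (G.loc b)) (G.batNode G.t₀ b) = a b := by
  simpa using hb

omit hT in
lemma cap_chargeStrategy_discharge_t₀ (hb : 0 ≤ a b) :
    G.cap (G.chargeStrategy ∘ a) (G.batNode G.t₀ b) (G.gridNode G.t₀ (G.loc b)) = 0 := by
  simpa using hb

lemma cap_chargeStrategy_charge_t₁ (hb : 0 ≤ a b) :
    G.cap (G.chargeStrategy ∘ a) (G.gridNode (t₁ hT) (G.loc b)) (G.batNode (t₁ hT) b) = 0 := by
  simpa [chargeStrategy_t₁ hT] using hb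

lemma cap_chargeStrategy_discharge_t₁ (hb : 0 ≤ a b) :
    G.cap (G.chargeStrategy ∘ a) (G.batNode (t₁ hT) b) (G.gridNode (t₁ hT) (G.loc b)) = a b := by
  simpa [chargeStrategy_t₁ hT] using hb

end ChargeProfile

namespace IsFlow

variable {a a' : G.B → ℝ} {f : G.Node → G.Node → ℝ}

lemma discharge_t₁_eq_initialCharge (hf : G.IsFlow (G.cap (G.chargeStrategy ∘ a)) f) {b : G.B}
    (hb : 0 ≤ a b) :
    f (G.batNode (t₁ hT) b) (G.gridNode (t₁ hT) (G.loc b)) = G.initialCharge f b := by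
  have hd₀ := hf.eq_zero_of_cap_eq_zero (cap_chargeStrategy_discharge_t₀ hb)
  have hc₁ := hf.eq_zero_of_cap_eq_zero (cap_chargeStrategy_charge_t₁ hT hb)
  have e₀ := hf.conserve_batNode_t₀ hT b
  have e₁ := hf.conserve_batNode_t₁ hT b
  rw [initialCharge]
  linarith

lemma chargeStrategy_mono (hf : G.IsFlow (G.cap (G.chargeStrategy ∘ a)) f) (ha : 0 ≤ a)
    (hle : a ≤ a') : G.IsFlow (G.cap (G.chargeStrategy ∘ a')) f := by
  refine hf.of_transaction_le (fun t b => (hf.le_cap _ _).trans ?_)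
    (fun t b => (hf.le_cap _ _).trans ?_) <;>
  · have hb : 0 ≤ a b := ha b
    have hb' : 0 ≤ a' b := hb.trans (hle b)
    rcases eq_t₀_or_eq_t₁ hT t with rfl | rfl <;>
    simp only [cap_chargeStrategy_charge_t₀, cap_chargeStrategy_discharge_t₀,
      cap_chargeStrategy_charge_t₁ hT, cap_chargeStrategy_discharge_t₁ hT, hb, hb', hle b,
      le_refl]

lemma chargeStrategy_initialCharge (hf : G.IsFlow (G.cap (G.chargeStrategy ∘ a)) f)
    (ha : 0 ≤ a) : G.IsFlow (G.cap (G.chargeStrategy ∘ G.initialCharge f)) f := by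
  have hi : 0 ≤ G.initialCharge f := fun b => hf.nonneg _ _
  refine hf.of_transaction_le (fun t b => ?_) (fun t b => ?_) <;>
  rcases eq_t₀_or_eq_t₁ hT t with rfl | rfl
  · rw [cap_chargeStrategy_charge_t₀ (hi b)]
    rfl
  · rw [cap_chargeStrategy_charge_t₁ hT (hi b)]
    exact (hf.eq_zero_of_cap_eq_zero (cap_chargeStrategy_charge_t₁ hT (ha b))).le
  · rw [cap_chargeStrategy_discharge_t₀ (hi b)]
    exact (hf.eq_zero_of_cap_eq_zero (cap_chargeStrategy_discharge_t₀ (ha b))).le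
  · rw [cap_chargeStrategy_discharge_t₁ hT (hi b), hf.discharge_t₁_eq_initialCharge hT (ha b)]

end IsFlow

lemma admissible_chargeStrategy_iff {a : G.B → ℝ} {b : G.B} (hb : 0 ≤ a b) :
    G.Admissible (G.chargeStrategy ∘ a) b ↔
      ∀ f, G.IsMaxFlow (G.cap (G.chargeStrategy ∘ a)) f → G.initialCharge f b = a b := by
  refine ⟨fun hadm f hf => (hadm f hf G.t₀).1.trans (cap_chargeStrategy_charge_t₀ hb),
    fun h f hf t => ?_⟩
  rcases eq_t₀_or_eq_t₁ hT t with rfl | rfl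
  · rw [cap_chargeStrategy_charge_t₀ hb, cap_chargeStrategy_discharge_t₀ hb]
    exact ⟨h f hf, hf.1.eq_zero_of_cap_eq_zero (cap_chargeStrategy_discharge_t₀ hb)⟩
  · rw [cap_chargeStrategy_charge_t₁ hT hb, cap_chargeStrategy_discharge_t₁ hT hb,
      hf.1.discharge_t₁_eq_initialCharge hT hb]
    exact ⟨hf.1.eq_zero_of_cap_eq_zero (cap_chargeStrategy_charge_t₁ hT hb), h f hf⟩

lemma IsMaxFlow.chargeStrategy_of_le {κ a : G.B → ℝ} {f : G.Node → G.Node → ℝ} (hκ : 0 ≤ κ)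
    (hf : G.IsMaxFlow (G.cap (G.chargeStrategy ∘ κ)) f) (hfa : G.initialCharge f ≤ a)
    (haκ : a ≤ κ) : G.IsMaxFlow (G.cap (G.chargeStrategy ∘ a)) f := by
  have hi : 0 ≤ G.initialCharge f := fun b => hf.1.nonneg _ _
  exact ⟨(hf.1.chargeStrategy_initialCharge hT hκ).chargeStrategy_mono hT hi hfa,
    fun g hg => hf.2 g (hg.chargeStrategy_mono hT (hi.trans hfa) haκ)⟩

lemma exists_admissible_maximal_chargeStrategy :
    ∃ a : G.B → ℝ, (∀ b, 0 ≤ a b ∧ a b ≤ G.κB b G.t₀) ∧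
      (∀ b, G.Admissible (G.chargeStrategy ∘ a) b) ∧
      ∀ b x, x ≤ G.κB b G.t₀ →
        G.Admissible (G.chargeStrategy ∘ Function.update a b x) b → x ≤ a b := by
  set κ : G.B → ℝ := fun b => G.κB b G.t₀
  have hκ : 0 ≤ κ := fun b => G.κB_nonneg b G.t₀
  obtain ⟨f₀, hf₀, hmin⟩ :=
    (isCompact_setOf_isMaxFlow (G.cap (G.chargeStrategy ∘ κ))).exists_isMinOn
      (exists_isMaxFlow (cap_nonneg _)) (f := fun f => ∑ b, G.initialCharge f b)
      (continuous_finsetSum _ fun b _ => by unfold initialCharge; fun_prop).continuousOn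
  set a₀ := G.initialCharge f₀
  have ha₀ (b : G.B) : 0 ≤ a₀ b ∧ a₀ b ≤ κ b :=
    ⟨hf₀.1.nonneg _ _, (hf₀.1.le_cap _ _).trans_eq (cap_chargeStrategy_charge_t₀ (hκ b))⟩
  have hf₀a {a : G.B → ℝ} (h₁ : a₀ ≤ a) (h₂ : a ≤ κ) :
      G.IsMaxFlow (G.cap (G.chargeStrategy ∘ a)) f₀ :=
    hf₀.chargeStrategy_of_le hT hκ h₁ h₂
  refine ⟨a₀, ha₀, fun b => (admissible_chargeStrategy_iff hT (ha₀ b).1).2 fun f hf => ?_,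
    fun b x hxκ hadm => ?_⟩
  · have hfκ : G.IsMaxFlow (G.cap (G.chargeStrategy ∘ κ)) f :=
      ⟨hf.1.chargeStrategy_mono hT (fun b => (ha₀ b).1) (fun b => (ha₀ b).2),
        fun g hg => (hf₀.2 g hg).trans (hf.2 f₀ (hf₀a le_rfl fun b => (ha₀ b).2).1)⟩
    have hle (b : G.B) : G.initialCharge f b ≤ a₀ b :=
      (hf.1.le_cap _ _).trans_eq (cap_chargeStrategy_charge_t₀ (ha₀ b).1)
    exact (Finset.sum_eq_sum_iff_of_le fun b _ => hle b).1
      (le_antisymm (Finset.sum_le_sum fun b _ => hle b) (isMinOn_iff.1 hmin f hfκ)) b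
      (Finset.mem_univ b)
  · by_contra! hlt
    have hx₀ : 0 ≤ Function.update a₀ b x b := by simpa using (ha₀ b).1.trans hlt.le
    have hx := (admissible_chargeStrategy_iff hT hx₀).1 hadm f₀
      (hf₀a (le_update_self_iff.2 hlt.le) (update_le_iff.2 ⟨hxκ, fun j _ => (ha₀ j).2⟩))
    rw [Function.update_self] at hx
    exact hlt.ne hx

lemma isNash_chargeStrategy {a : G.B → ℝ} {p : Fin G.T → ℝ}
    (ha : ∀ b, 0 ≤ a b ∧ a b ≤ G.κB b G.t₀) (hadm : ∀ b, G.Admissible (G.chargeStrategy ∘ a) b)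
    (hbest : ∀ b x, 0 ≤ x → x ≤ G.κB b G.t₀ →
      G.Admissible (G.chargeStrategy ∘ Function.update a b x) b →
        a b * (p G.t₀ - p (t₁ hT)) ≤ x * (p G.t₀ - p (t₁ hT))) :
    G.IsNash p (G.chargeStrategy ∘ a) := by
  refine isNash_of_forall_admissible (fun b => (validStrategy_iff hT).2 (by simpa using ha b))
    hadm fun b sb hsb hadm' => ?_
  obtain ⟨hx₀, hxκ⟩ := (validStrategy_iff hT).1 hsb
  have hsb' : sb = G.chargeStrategy (sb G.t₀) := by
    simpa using eq_chargeStrategy_of_admissible hT hadm'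
  rw [hsb', ← Function.comp_update] at hadm'
  rw [hsb', Function.comp_apply, sum_chargeStrategy_mul hT, sum_chargeStrategy_mul hT]
  exact hbest b _ hx₀ hxκ hadm'

end TwoSteps

end ChargingGame

/-- For every instance with `T = 2` time steps and every price profile,
there exists a Nash equilibrium. -/
theorem exists_nash_of_two_steps (G : ChargingGame) (hT : G.T = 2)
    (p : Fin G.T → ℝ) :
    ∃ s : G.B → Fin G.T → ℝ, G.IsNash p s := by
  open ChargingGame in
  rcases le_or_gt (p (t₁ hT)) (p G.t₀) with hfall | hrise
  · refine ⟨G.chargeStrategy ∘ 0, isNash_chargeStrategy hT (fun b => ⟨le_rfl, G.κB_nonneg b _⟩)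
      (fun b => admissible_of_eq_zero (funext fun t => by simp [chargeStrategy])) ?_⟩
    intro b x hx _ _
    simpa using mul_nonneg hx (sub_nonneg.2 hfall)
  · obtain ⟨a, ha, hadm, hmax⟩ := exists_admissible_maximal_chargeStrategy hT
    exact ⟨G.chargeStrategy ∘ a, isNash_chargeStrategy hT ha hadm fun b x _ hxκ hx =>
      mul_le_mul_of_nonpos_right (hmax b x hxκ hx) (by linarith)⟩
end

section
/- There exists an instance of the charging game with T=2 time steps (namely: H has two vertices u,w joined by edges (u,w) and (w,u) of capacity 1 in each time step, with demands d(u_1)=+1, d(w_2)=−1 and all other demands 0, and two battery agents at u and w with battery capacities 2 and 1, respectively) such that the maximum welfare over all strategy profiles is 1, while for every price profile p with p_1 > p_2, every Nash equilibrium has welfare 0; hence the price of stability for descending prices is infinite. -/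
/-- The instance of STATEMENT 8: two vertices `u = false` and `w = true` joined by edges
`(u, w)` and `(w, u)` of capacity `1` in each of `T = 2` time steps, demands
`d(u_1) = +1`, `d(w_2) = -1` (all others `0`), and two battery agents located at `u`
and `w` with battery capacities `2` and `1`, respectively. -/
noncomputable def game8 : ChargingGame where
  V := Bool
  fintypeV := inferInstance
  decV := inferInstance
  T := 2
  T_pos := by norm_num
  E := {(false, true), (true, false)}
  κE := fun _ _ => 1
  κE_nonneg := fun _ _ => zero_le_one
  d := fun t v =>
    if t.val = 0 ∧ v = false then 1 else if t.val = 1 ∧ v = true then -1 else 0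
  B := Bool
  fintypeB := inferInstance
  decB := inferInstance
  loc := id
  κB := fun b _ => if b = false then 2 else 1
  κB_nonneg := by intro b t; (try dsimp only); split <;> norm_num

set_option maxHeartbeats 1600000
section Game8Aux
attribute [reducible] game8
namespace Game8
open ChargingGame

lemma cap_nonneg (s : Bool → Fin 2 → ℝ) : ∀ u v, 0 ≤ game8.cap s u v := by
  intro u v
  rcases u with ⟨t,v0⟩ | ⟨⟨t,b⟩ | x⟩ <;> rcases v with ⟨t',v1⟩ | ⟨⟨t'',b'⟩ | x'⟩ <;>
    (try cases x) <;> (try cases x') <;>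
    simp only [ChargingGame.cap, game8] <;>
    repeat' first | positivity | split

lemma isFlow_zero (s : Bool → Fin 2 → ℝ) :
    game8.IsFlow (game8.cap s) (fun _ _ => 0) :=
  ⟨fun _ _ => le_refl 0, fun u v => cap_nonneg s u v, fun _ _ _ => by simp⟩

lemma value_zero_flow : game8.value (fun _ _ => (0:ℝ)) = 0 := by
  simp [ChargingGame.value]

lemma sum_cap_source (s : Bool → Fin 2 → ℝ) :
    ∑ v, game8.cap s game8.source v = 1 := by
  simp only [Fintype.sum_sum_type, Fintype.sum_prod_type, Fintype.sum_bool, Fin.sum_univ_two,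
    ChargingGame.cap, game8]
  norm_num

lemma value_le_one (s : Bool → Fin 2 → ℝ) (f) (hf : game8.IsFlow (game8.cap s) f) :
    game8.value f ≤ 1 := by
  have h : game8.value f ≤ ∑ v, game8.cap s game8.source v :=
    Finset.sum_le_sum fun v _ => hf.le_cap _ v
  rw [sum_cap_source] at h
  exact h

lemma welfareSet_nonempty (s : Bool → Fin 2 → ℝ) :
    {r | ∃ f, game8.IsFlow (game8.cap s) f ∧ game8.value f = r}.Nonempty :=
  ⟨0, fun _ _ => 0, isFlow_zero s, value_zero_flow⟩

lemma welfareSet_bddAbove (s : Bool → Fin 2 → ℝ) :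
    BddAbove {r | ∃ f, game8.IsFlow (game8.cap s) f ∧ game8.value f = r} := by
  refine ⟨1, ?_⟩
  rintro r ⟨f, hf, rfl⟩
  exact value_le_one s f hf

lemma welfare_le_one (s : Bool → Fin 2 → ℝ) : game8.welfare s ≤ 1 := by
  rw [ChargingGame.welfare]
  refine csSup_le (welfareSet_nonempty s) ?_
  rintro r ⟨f, hf, rfl⟩
  exact value_le_one s f hf

lemma continuous_value : Continuous (game8.value) := by
  unfold ChargingGame.value
  exact continuous_finset_sum _ fun v _ => (continuous_apply v).comp (continuous_apply _)

lemma exists_maxflow (s : Bool → Fin 2 → ℝ) :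
    ∃ f, game8.IsMaxFlow (game8.cap s) f := by
  set c := game8.cap s with hc
  set K : Set (game8.Node → game8.Node → ℝ) := {f | game8.IsFlow c f} with hK
  have hsub : K ⊆ Set.Icc (fun _ _ => 0) c := by
    intro f hf
    constructor
    · intro u; intro v; exact hf.nonneg u v
    · intro u; intro v; exact hf.le_cap u v
  have hclosed : IsClosed K := by
    have h1 : IsClosed {f : game8.Node → game8.Node → ℝ | ∀ u v, 0 ≤ f u v} := by
      rw [Set.setOf_forall]
      refine isClosed_iInter fun u => ?_
      rw [Set.setOf_forall]
      refine isClosed_iInter fun v => ?_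
      exact isClosed_le continuous_const ((continuous_apply v).comp (continuous_apply u))
    have h2 : IsClosed {f : game8.Node → game8.Node → ℝ | ∀ u v, f u v ≤ c u v} := by
      rw [Set.setOf_forall]
      refine isClosed_iInter fun u => ?_
      rw [Set.setOf_forall]
      refine isClosed_iInter fun v => ?_
      exact isClosed_le ((continuous_apply v).comp (continuous_apply u)) continuous_const
    have h3 : IsClosed {f : game8.Node → game8.Node → ℝ |
        ∀ n, n ≠ game8.source → n ≠ game8.sink → (∑ u, f u n) = (∑ w, f n w)} := by
      rw [Set.setOf_forall]
      refine isClosed_iInter fun n => ?_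
      by_cases hn1 : n = game8.source
      · simp [hn1]
      by_cases hn2 : n = game8.sink
      · have : {f : game8.Node → game8.Node → ℝ |
            n ≠ game8.source → n ≠ game8.sink → (∑ u, f u n) = (∑ w, f n w)} = Set.univ := by
          ext f; simp [hn2]
        rw [this]; exact isClosed_univ
      · have : {f : game8.Node → game8.Node → ℝ |
            n ≠ game8.source → n ≠ game8.sink → (∑ u, f u n) = (∑ w, f n w)} =
            {f | (∑ u, f u n) = (∑ w, f n w)} := by
          ext f; simp [hn1, hn2]
        rw [this]
        exact isClosed_eq
          (continuous_finset_sum _ fun u _ => (continuous_apply n).comp (continuous_apply u))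
          (continuous_finset_sum _ fun w _ => (continuous_apply w).comp (continuous_apply n))
    have : K = {f : game8.Node → game8.Node → ℝ | ∀ u v, 0 ≤ f u v} ∩
        ({f | ∀ u v, f u v ≤ c u v} ∩ {f | ∀ n, n ≠ game8.source → n ≠ game8.sink →
          (∑ u, f u n) = (∑ w, f n w)}) := by
      ext f
      constructor
      · rintro ⟨a, b, d⟩; exact ⟨a, b, d⟩
      · rintro ⟨a, b, d⟩; exact ⟨a, b, d⟩
    rw [this]
    exact h1.inter (h2.inter h3)
  have hcompact : IsCompact K :=
    (isCompact_Icc (a := fun _ _ => (0:ℝ)) (b := c)).of_isClosed_subset hclosed hsub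
  have hne : K.Nonempty := ⟨fun _ _ => 0, isFlow_zero s⟩
  obtain ⟨f, hfK, hmax⟩ := hcompact.exists_isMaxOn hne continuous_value.continuousOn
  exact ⟨f, hfK, fun g hg => hmax hg⟩

lemma max_sub_max (x : ℝ) : max 0 x - max 0 (-x) = x := by
  rcases le_total 0 x with h | h
  · rw [max_eq_right h, max_eq_left (by linarith)]; ring
  · rw [max_eq_left h, max_eq_right (by linarith)]; ring

/-- structure of an admissible strategy, given a max flow -/
lemma admissible_structure (s : Bool → Fin 2 → ℝ) (b : Bool)
    (f : game8.Node → game8.Node → ℝ) (hf : game8.IsMaxFlow (game8.cap s) f)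
    (hb : game8.Admissible s b) :
    0 ≤ s b 0 ∧ s b 1 = - s b 0 := by
  have hz : ∀ u v, game8.cap s u v = 0 → f u v = 0 := fun u v h =>
    le_antisymm (h ▸ hf.1.le_cap u v) (hf.1.nonneg u v)
  have hzs : ∀ n, f game8.sink n = 0 := fun n => hz _ _ (by
    rcases n with ⟨t, v⟩ | ⟨⟨t, b'⟩ | x⟩ <;> (try cases x) <;> rfl)
  have hzx : ∀ n, f n game8.source = 0 := fun n => hz _ _ (by
    rcases n with ⟨t, v⟩ | ⟨⟨t, b'⟩ | x⟩ <;> (try cases x) <;> rfl)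
  have hzx' : ∀ n, f game8.source (Sum.inr n) = 0 := fun n => hz _ _ (by
    rcases n with ⟨t, b'⟩ | x <;> (try cases x) <;> rfl)
  have hzb : ∀ t b', f (game8.batNode t b') game8.sink = 0 := fun t b' => hz _ _ rfl
  have hsat0 := hb f hf (show Fin game8.T from (0 : Fin 2))
  have hsat1 := hb f hf (show Fin game8.T from (1 : Fin 2))
  have h0 := hf.1.conserve (game8.batNode ⟨0, by norm_num [game8]⟩ b) (by simp) (by simp)
  have h1 := hf.1.conserve (game8.batNode ⟨1, by norm_num [game8]⟩ b) (by simp) (by simp)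
  have hnn := hf.1.nonneg (game8.batNode ⟨0, by norm_num [game8]⟩ b)
    (game8.batNode ⟨1, by norm_num [game8]⟩ b)
  simp only [Fintype.sum_sum_type, Fintype.sum_prod_type, Fintype.sum_bool,
    Fin.sum_univ_two] at h0 h1
  obtain ⟨hs0a, hs0b⟩ := hsat0
  obtain ⟨hs1a, hs1b⟩ := hsat1
  cases b <;>
  · simp only [ChargingGame.cap, ChargingGame.gridNode, ChargingGame.batNode, game8, id_eq,
      and_self, eq_self_iff_true, if_true, ite_true, true_and] at hs0a hs0b hs1a hs1b
    simp [hz, hzs, hzx, hzx', hzb, ChargingGame.cap, ChargingGame.batNode, ChargingGame.gridNode, game8, hs0a, hs0b, hs1a, hs1b] at h0 h1 hnn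
    constructor
    · linarith [max_sub_max (s false 0), max_sub_max (s true 0)]
    · linarith [max_sub_max (s false 0), max_sub_max (s true 0),
        max_sub_max (s false 1), max_sub_max (s true 1)]

lemma validStrategy_zero (b : Bool) : game8.ValidStrategy b (fun _ => 0) := by
  intro t ht
  constructor
  · simp
  · simp only [Finset.sum_const_zero]
    cases b <;> norm_num

lemma admissible_of_own_zero (s : Bool → Fin 2 → ℝ) (b : Bool) (hb : ∀ t, s b t = 0) :
    game8.Admissible s b := by
  intro f hf t
  have h1 : game8.cap s (game8.gridNode t (game8.loc b)) (game8.batNode t b) = 0 := by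
    simp [ChargingGame.cap, game8, hb]
  have h2 : game8.cap s (game8.batNode t b) (game8.gridNode t (game8.loc b)) = 0 := by
    simp [ChargingGame.cap, game8, hb]
  constructor
  · rw [h1]; exact le_antisymm (h1 ▸ hf.1.le_cap _ _) (hf.1.nonneg _ _)
  · rw [h2]; exact le_antisymm (h2 ▸ hf.1.le_cap _ _) (hf.1.nonneg _ _)

lemma utility_of_own_zero (p : Fin 2 → ℝ) (s : Bool → Fin 2 → ℝ) (b : Bool)
    (hb : ∀ t, s b t = 0) : game8.utility p s b = ((0:ℝ) : EReal) := by
  simp only [ChargingGame.utility]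
  rw [if_pos (admissible_of_own_zero s b hb)]
  norm_num [hb]

lemma nash_admissible (p : Fin 2 → ℝ) (s : Bool → Fin 2 → ℝ)
    (hn : game8.IsNash p s) (b : Bool) : game8.Admissible s b := by
  by_contra h
  refine hn.2 b (fun _ => 0) (validStrategy_zero b) ?_
  refine lt_of_lt_of_eq ?_ (Eq.symm (utility_of_own_zero p _ b (fun t => by simp)))
  simp only [ChargingGame.utility]
  rw [if_neg h]
  exact EReal.bot_lt_coe 0

lemma nash_strategies_zero (p : Fin 2 → ℝ) (hp : p 1 < p 0) (s : Bool → Fin 2 → ℝ)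
    (hn : game8.IsNash p s) : ∀ b t, s b t = 0 := by
  intro b
  obtain ⟨f, hf⟩ := exists_maxflow s
  have hadm := nash_admissible p s hn b
  obtain ⟨h0, h1⟩ := admissible_structure s b f hf hadm
  have hns := hn.2 b (fun _ => 0) (validStrategy_zero b)
  have hns' : ¬ (((-(∑ t, s b t * p t) : ℝ) : EReal) < ((0:ℝ) : EReal)) := by
    intro hlt
    apply hns
    refine lt_of_lt_of_eq ?_ (Eq.symm (utility_of_own_zero p _ b (fun t => by simp)))
    simp only [ChargingGame.utility]
    rw [if_pos hadm]
    exact hlt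
  have hre : (0:ℝ) ≤ -(∑ t, s b t * p t) := by exact_mod_cast not_lt.1 hns'
  rw [Fin.sum_univ_two, h1] at hre
  have hle : s b 0 ≤ 0 := by nlinarith
  have hs0 : s b 0 = 0 := le_antisymm hle h0
  intro t
  fin_cases t
  · exact hs0
  · show s b 1 = 0
    rw [h1, hs0, neg_zero]

lemma value_eq_zero_of_zero (s : Bool → Fin 2 → ℝ) (hs : ∀ b t, s b t = 0)
    (f : game8.Node → game8.Node → ℝ) (hf : game8.IsFlow (game8.cap s) f) :
    game8.value f = 0 := by
  have hz : ∀ u v, game8.cap s u v = 0 → f u v = 0 := fun u v h =>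
    le_antisymm (h ▸ hf.le_cap u v) (hf.nonneg u v)
  have hzs : ∀ n, f game8.sink n = 0 := fun n => hz _ _ (by
    rcases n with ⟨t, v⟩ | ⟨⟨t, b'⟩ | x⟩ <;> (try cases x) <;> rfl)
  have hzx : ∀ n, f n game8.source = 0 := fun n => hz _ _ (by
    rcases n with ⟨t, v⟩ | ⟨⟨t, b'⟩ | x⟩ <;> (try cases x) <;> rfl)
  have hzx' : ∀ n, f game8.source (Sum.inr n) = 0 := fun n => hz _ _ (by
    rcases n with ⟨t, b'⟩ | x <;> (try cases x) <;> rfl)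
  have hzb : ∀ t b', f (game8.batNode t b') game8.sink = 0 := fun t b' => hz _ _ rfl
  have h0 := hf.conserve (game8.gridNode ⟨0, by norm_num [game8]⟩ false) (by simp) (by simp)
  have h1 := hf.conserve (game8.gridNode ⟨0, by norm_num [game8]⟩ true) (by simp) (by simp)
  simp [hz, hzs, hzx, hzx', hzb, ChargingGame.cap, ChargingGame.gridNode, ChargingGame.batNode, ChargingGame.source,
    ChargingGame.sink, game8, hs, Fintype.sum_sum_type, Fintype.sum_prod_type,
    Fintype.sum_bool, Fin.sum_univ_two] at h0 h1
  rw [ChargingGame.value]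
  simp [hz, hzs, hzx, hzx', hzb, ChargingGame.cap, ChargingGame.gridNode, ChargingGame.batNode, ChargingGame.source,
    ChargingGame.sink, game8, hs, Fintype.sum_sum_type, Fintype.sum_prod_type,
    Fintype.sum_bool, Fin.sum_univ_two]
  linarith

lemma welfare_zero (s : Bool → Fin 2 → ℝ) (hs : ∀ b t, s b t = 0) :
    game8.welfare s = 0 := by
  have hset : {r | ∃ f, game8.IsFlow (game8.cap s) f ∧ game8.value f = r} = {0} := by
    ext r
    simp only [Set.mem_setOf_eq, Set.mem_singleton_iff]
    constructor
    · rintro ⟨f, hf, rfl⟩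
      exact value_eq_zero_of_zero s hs f hf
    · rintro rfl
      exact ⟨fun _ _ => 0, isFlow_zero s, value_zero_flow⟩
  rw [ChargingGame.welfare, hset, csSup_singleton]

/-- the optimal strategy profile: agent at `u` charges 1 in step 1 and discharges 1 in step 2 -/
noncomputable def s0 : Bool → Fin 2 → ℝ :=
  fun b t => if b = false then (if (t : ℕ) = 0 then 1 else -1) else 0

lemma validProfile_s0 : game8.ValidProfile s0 := by
  intro b t ht
  have ht2 : (t : ℕ) + 1 < 2 := ht
  have hIic : Finset.Iic t = {t} := by
    refine Finset.eq_singleton_iff_unique_mem.2 ⟨Finset.mem_Iic.2 le_rfl, fun x hx => ?_⟩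
    have hx1 : x ≤ t := Finset.mem_Iic.1 hx
    have hx2 : (x : ℕ) ≤ (t : ℕ) := hx1
    exact Fin.ext (by omega)
  rw [hIic, Finset.sum_singleton]
  have ht0 : (t : ℕ) = 0 := by omega
  cases b <;> simp [s0, game8, ht0] <;> norm_num

/-- the max flow along `x → u₁ → b₁ → b₂ → u₂ → w₂ → y` for the profile `s0` -/
noncomputable def f0 : game8.Node → game8.Node → ℝ := fun u v =>
  match u, v with
  | Sum.inr (Sum.inr false), Sum.inl (t, v) => if (t : ℕ) = 0 ∧ v = false then 1 else 0
  | Sum.inl (t, v), Sum.inr (Sum.inl (t', b)) =>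
      if (t : ℕ) = 0 ∧ (t' : ℕ) = 0 ∧ v = false ∧ b = false then 1 else 0
  | Sum.inr (Sum.inl (t, b)), Sum.inr (Sum.inl (t', b')) =>
      if (t : ℕ) = 0 ∧ (t' : ℕ) = 1 ∧ b = false ∧ b' = false then 1 else 0
  | Sum.inr (Sum.inl (t, b)), Sum.inl (t', v) =>
      if (t : ℕ) = 1 ∧ (t' : ℕ) = 1 ∧ b = false ∧ v = false then 1 else 0
  | Sum.inl (t, v), Sum.inl (t', v') =>
      if (t : ℕ) = 1 ∧ (t' : ℕ) = 1 ∧ v = false ∧ v' = true then 1 else 0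
  | Sum.inl (t, v), Sum.inr (Sum.inr true) => if (t : ℕ) = 1 ∧ v = true then 1 else 0
  | _, _ => 0

lemma isFlow_f0 : game8.IsFlow (game8.cap s0) f0 := by
  refine ⟨?_, ?_, ?_⟩
  · intro u v
    rcases u with ⟨t,v0⟩ | ⟨⟨t,b⟩ | x⟩ <;> rcases v with ⟨t',v1⟩ | ⟨⟨t'',b'⟩ | x'⟩ <;>
      (try cases x) <;> (try cases x') <;>
      simp only [f0] <;>
      repeat' first | positivity | split
  · intro u v
    rcases u with ⟨⟨tu,hu⟩,vu⟩ | ⟨⟨⟨tu,hu⟩,bu⟩ | xu⟩ <;>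
      rcases v with ⟨⟨tv,hv⟩,vv⟩ | ⟨⟨⟨tv,hv⟩,bv⟩ | xv⟩ <;>
      (try cases xu) <;> (try cases xv) <;>
      (try cases vu) <;> (try cases vv) <;> (try cases bu) <;> (try cases bv) <;>
      (try (have hu2 : tu < 2 := hu; interval_cases tu)) <;>
      (try (have hv2 : tv < 2 := hv; interval_cases tv)) <;>
      simp [f0, s0, ChargingGame.cap, game8] <;> norm_num
  · intro n hn1 hn2
    rcases n with ⟨⟨tn,hn⟩,vn⟩ | ⟨⟨⟨tn,hn⟩,bn⟩ | xn⟩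
    · cases vn <;> (have h2 : tn < 2 := hn; interval_cases tn) <;>
        (simp only [game8, Fintype.sum_sum_type, Fintype.sum_prod_type, Fintype.sum_bool,
          Fin.sum_univ_two]; simp [f0, game8]; try norm_num)
    · cases bn <;> (have h2 : tn < 2 := hn; interval_cases tn) <;>
        (simp only [game8, Fintype.sum_sum_type, Fintype.sum_prod_type, Fintype.sum_bool,
          Fin.sum_univ_two]; simp [f0, game8]; try norm_num)
    · cases xn
      · exact absurd rfl hn1
      · exact absurd rfl hn2

lemma value_f0 : game8.value f0 = 1 := by
  rw [ChargingGame.value]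
  simp only [ChargingGame.source, game8, Fintype.sum_sum_type, Fintype.sum_prod_type,
    Fintype.sum_bool, Fin.sum_univ_two]
  simp [f0, game8]

lemma welfare_s0 : game8.welfare s0 = 1 := by
  refine le_antisymm (welfare_le_one s0) ?_
  rw [ChargingGame.welfare]
  exact le_csSup (welfareSet_bddAbove s0) ⟨f0, isFlow_f0, value_f0⟩

end Game8
end Game8Aux

/-- In the instance `game8`, the maximum welfare over all strategy profiles
is `1`, while for every descending price profile (`p 1 > p 2`) every Nash equilibrium
has welfare `0`; hence the price of stability for descending prices is infinite. -/
theorem descending_prices_pos_infinite :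
    game8.optWelfare = 1 ∧
    ∀ p : Fin 2 → ℝ, p 1 < p 0 →
      ∀ s : Bool → Fin 2 → ℝ, game8.IsNash p s → game8.welfare s = 0 := by
  constructor
  · have hmem : (1:ℝ) ∈ {r | ∃ s, game8.ValidProfile s ∧ game8.welfare s = r} :=
      ⟨Game8.s0, Game8.validProfile_s0, Game8.welfare_s0⟩
    have hub : ∀ r ∈ {r | ∃ s, game8.ValidProfile s ∧ game8.welfare s = r}, r ≤ (1:ℝ) := by
      rintro r ⟨s, -, rfl⟩
      exact Game8.welfare_le_one s
    rw [ChargingGame.optWelfare]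
    exact le_antisymm (csSup_le ⟨1, hmem⟩ hub) (le_csSup ⟨1, fun r hr => hub r hr⟩ hmem)
  · intro p hp s hn
    exact Game8.welfare_zero s (Game8.nash_strategies_zero p hp s hn)
end
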